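/- arXiv:1603.00271 — 4 statements merged into one kernel-verified Lean document; each statement's English description precedes it below -/
import Mathlib

section
/- Let σ₀, σ̂₀ > 0 and let A, B ∈ ℝ. The function (s,t) ↦ (A/σ₀)·s + (B/σ̂₀)·t − √(s² + t²) on {(s,t) : s ≥ 0, t ≥ 0} has supremum equal to 0 if (A, B) ∈ K, and is unbounded above if (A, B) ∉ K. -/
/-- The set `K = K₁ ∪ K₂ ∪ K₃` of the paper, with
`K₁ = (−∞, σ₀] × (−∞, 0]`, `K₂ = (−∞, 0] × (−∞, σ̂₀]`,
`K₃ = {(A,B) : A ≥ 0, B ≥ 0, A²/σ₀² + B²/σ̂₀² ≤ 1}`. -/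
def Kset (s0 sh0 : ℝ) : Set (ℝ × ℝ) :=
  {p | p.1 ≤ s0 ∧ p.2 ≤ 0} ∪ {p | p.1 ≤ 0 ∧ p.2 ≤ sh0} ∪
    {p | 0 ≤ p.1 ∧ 0 ≤ p.2 ∧ p.1 ^ 2 / s0 ^ 2 + p.2 ^ 2 / sh0 ^ 2 ≤ 1}

/-- The supremum of `(s,t) ↦ (A/σ₀)·s + (B/σ̂₀)·t − √(s² + t²)` over `s, t ≥ 0` equals
`0` if `(A,B) ∈ K`, and the function is unbounded above if `(A,B) ∉ K`. -/
theorem sup_eq_indicator_K (s0 sh0 : ℝ) (hs0 : 0 < s0) (hsh0 : 0 < sh0) (A B : ℝ) :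
    ((A, B) ∈ Kset s0 sh0 →
      IsLUB {x : ℝ | ∃ s t : ℝ, 0 ≤ s ∧ 0 ≤ t ∧
        x = (A / s0) * s + (B / sh0) * t - Real.sqrt (s ^ 2 + t ^ 2)} 0) ∧
    ((A, B) ∉ Kset s0 sh0 →
      ∀ M : ℝ, ∃ s t : ℝ, 0 ≤ s ∧ 0 ≤ t ∧
        M < (A / s0) * s + (B / sh0) * t - Real.sqrt (s ^ 2 + t ^ 2)) := by
  set a := A / s0 with ha
  set b := B / sh0 with hb
  constructor
  · intro hK
    have key : ∀ s t : ℝ, 0 ≤ s → 0 ≤ t → a * s + b * t ≤ Real.sqrt (s ^ 2 + t ^ 2) := by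
      intro s t hs ht
      have hssq : s ≤ Real.sqrt (s ^ 2 + t ^ 2) :=
        (Real.le_sqrt hs (by positivity)).mpr (by nlinarith)
      have htsq : t ≤ Real.sqrt (s ^ 2 + t ^ 2) :=
        (Real.le_sqrt ht (by positivity)).mpr (by nlinarith)
      rcases hK with (⟨h1, h2⟩ | ⟨h1, h2⟩) | ⟨h1, h2, h3⟩
      · have ha1 : a ≤ 1 := (div_le_one hs0).mpr h1
        have hb0 : b ≤ 0 := div_nonpos_iff.mpr (Or.inr ⟨h2, hsh0.le⟩)
        nlinarith
      · have ha1 : a ≤ 0 := div_nonpos_iff.mpr (Or.inr ⟨h1, hs0.le⟩)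
        have hb0 : b ≤ 1 := (div_le_one hsh0).mpr h2
        nlinarith
      · simp only at h1 h2 h3
        have han : 0 ≤ a := div_nonneg h1 hs0.le
        have hbn : 0 ≤ b := div_nonneg h2 hsh0.le
        have hsum : a ^ 2 + b ^ 2 ≤ 1 := by
          rw [ha, hb, div_pow, div_pow]; exact h3
        have hlhs : 0 ≤ a * s + b * t := by positivity
        exact (Real.le_sqrt hlhs (by positivity)).mpr
          (by nlinarith [sq_nonneg (a * t - b * s), sq_nonneg s, sq_nonneg t])
    constructor
    · rintro x ⟨s, t, hs, ht, rfl⟩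
      have := key s t hs ht
      linarith
    · intro M hM
      apply hM
      exact ⟨0, 0, le_refl 0, le_refl 0, by simp⟩
  · intro hK M
    have hwit : ∃ s t : ℝ, 0 ≤ s ∧ 0 ≤ t ∧
        0 < a * s + b * t - Real.sqrt (s ^ 2 + t ^ 2) := by
      simp only [Kset, Set.mem_union, Set.mem_setOf_eq, not_or, not_and_or, not_le] at hK
      obtain ⟨⟨hn1, hn2⟩, hn3⟩ := hK
      by_cases hA : s0 < A
      · refine ⟨1, 0, zero_le_one, le_refl 0, ?_⟩
        have : Real.sqrt (1 ^ 2 + 0 ^ 2) = 1 := by norm_num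
        rw [this]
        have : 1 < a := (one_lt_div hs0).mpr hA
        linarith
      · by_cases hB : sh0 < B
        · refine ⟨0, 1, le_refl 0, zero_le_one, ?_⟩
          have : Real.sqrt (0 ^ 2 + 1 ^ 2) = 1 := by norm_num
          rw [this]
          have : 1 < b := (one_lt_div hsh0).mpr hB
          linarith
        · push_neg at hA hB
          have hBpos : 0 < B := by
            rcases hn1 with h | h
            · linarith
            · linarith
          have hApos : 0 < A := by
            rcases hn2 with h | h
            · linarith
            · linarith
          have h3 : 1 < A ^ 2 / s0 ^ 2 + B ^ 2 / sh0 ^ 2 := by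
            rcases hn3 with h | h | h
            · linarith
            · linarith
            · exact h
          have hsum : 1 < a ^ 2 + b ^ 2 := by
            rw [ha, hb, div_pow, div_pow]; exact h3
          have han : 0 ≤ a := le_of_lt (div_pos hApos hs0)
          have hbn : 0 ≤ b := le_of_lt (div_pos hBpos hsh0)
          refine ⟨a, b, han, hbn, ?_⟩
          have hr : Real.sqrt (a ^ 2 + b ^ 2) < a ^ 2 + b ^ 2 := by
            nlinarith [Real.sq_sqrt (by positivity : (0:ℝ) ≤ a ^ 2 + b ^ 2),
              Real.sqrt_nonneg (a ^ 2 + b ^ 2),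
              (Real.lt_sqrt (by norm_num : (0:ℝ) ≤ 1)).mpr (by linarith : (1:ℝ) ^ 2 < a ^ 2 + b ^ 2)]
          nlinarith
    obtain ⟨s, t, hs, ht, hc⟩ := hwit
    set c := a * s + b * t - Real.sqrt (s ^ 2 + t ^ 2) with hcdef
    set L : ℝ := (|M| + 1) / c with hL
    have hLpos : 0 < L := by positivity
    refine ⟨L * s, L * t, by positivity, by positivity, ?_⟩
    have hsqrt : Real.sqrt ((L * s) ^ 2 + (L * t) ^ 2)
        = L * Real.sqrt (s ^ 2 + t ^ 2) := by
      rw [show (L * s) ^ 2 + (L * t) ^ 2 = L ^ 2 * (s ^ 2 + t ^ 2) by ring,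
        Real.sqrt_mul (sq_nonneg L), Real.sqrt_sq hLpos.le]
    rw [hsqrt]
    have hval : a * (L * s) + b * (L * t) - L * Real.sqrt (s ^ 2 + t ^ 2) = L * c := by
      rw [hcdef]; ring
    rw [hval, hL, div_mul_cancel₀ _ (ne_of_gt hc)]
    calc M ≤ |M| := le_abs_self M
      _ < |M| + 1 := by linarith
end

section
/- Let σ₀, σ̂₀ > 0. Then K = {(A, B) ∈ ℝ² : (A/σ₀)·s + (B/σ̂₀)·t ≤ √(s² + t²) for all s, t ≥ 0}. In particular, K is a closed convex subset of ℝ². -/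
/-- `K` is exactly the set of `(A,B)` with `(A/σ₀)·s + (B/σ̂₀)·t ≤ √(s² + t²)` for all
`s, t ≥ 0`; in particular `K` is a closed convex subset of `ℝ²`. -/
theorem Kset_characterization (s0 sh0 : ℝ) (hs0 : 0 < s0) (hsh0 : 0 < sh0) :
    Kset s0 sh0 =
      {p : ℝ × ℝ | ∀ s t : ℝ, 0 ≤ s → 0 ≤ t →
        (p.1 / s0) * s + (p.2 / sh0) * t ≤ Real.sqrt (s ^ 2 + t ^ 2)} ∧
    IsClosed (Kset s0 sh0) ∧ Convex ℝ (Kset s0 sh0) := by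
  have key : Kset s0 sh0 = {p : ℝ × ℝ | ∀ s t : ℝ, 0 ≤ s → 0 ≤ t →
      (p.1 / s0) * s + (p.2 / sh0) * t ≤ Real.sqrt (s ^ 2 + t ^ 2)} := by
    ext ⟨A, B⟩
    simp only [Kset, Set.mem_union, Set.mem_setOf_eq]
    constructor
    · rintro ((⟨h1, h2⟩ | ⟨h1, h2⟩) | ⟨h1, h2, h3⟩) s t hs ht
      · have hst : s ≤ Real.sqrt (s ^ 2 + t ^ 2) := by
          exact Real.le_sqrt_of_sq_le (by nlinarith)
        have h1' : A / s0 * s ≤ s := by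
          have : A / s0 ≤ 1 := (div_le_one hs0).2 h1
          nlinarith
        have h2' : B / sh0 * t ≤ 0 :=
          mul_nonpos_iff.2 (Or.inr ⟨div_nonpos_iff.2 (Or.inr ⟨h2, hsh0.le⟩), ht⟩)
        linarith
      · have hst : t ≤ Real.sqrt (s ^ 2 + t ^ 2) := by
          exact Real.le_sqrt_of_sq_le (by nlinarith)
        have h2' : B / sh0 * t ≤ t := by
          have : B / sh0 ≤ 1 := (div_le_one hsh0).2 h2
          nlinarith
        have h1' : A / s0 * s ≤ 0 :=
          mul_nonpos_iff.2 (Or.inr ⟨div_nonpos_iff.2 (Or.inr ⟨h1, hs0.le⟩), hs⟩)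
        linarith
      · set a := A / s0 with ha_def
        set b := B / sh0 with hb_def
        have ha : 0 ≤ a := div_nonneg h1 hs0.le
        have hb : 0 ≤ b := div_nonneg h2 hsh0.le
        have hab : a ^ 2 + b ^ 2 ≤ 1 := by
          rw [ha_def, hb_def, div_pow, div_pow]; exact h3
        have hnn : 0 ≤ a * s + b * t := by positivity
        apply Real.le_sqrt_of_sq_le
        nlinarith [sq_nonneg (a * t - b * s), sq_nonneg s, sq_nonneg t]
    · intro h
      have hA : A ≤ s0 := by
        have := h 1 0 zero_le_one le_rfl
        norm_num at this
        exact (div_le_one hs0).1 (by linarith)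
      have hB : B ≤ sh0 := by
        have := h 0 1 le_rfl zero_le_one
        norm_num at this
        exact (div_le_one hsh0).1 (by linarith)
      by_cases hBneg : B ≤ 0
      · exact Or.inl (Or.inl ⟨hA, hBneg⟩)
      by_cases hAneg : A ≤ 0
      · exact Or.inl (Or.inr ⟨hAneg, hB⟩)
      push_neg at hBneg hAneg
      refine Or.inr ⟨hAneg.le, hBneg.le, ?_⟩
      set a := A / s0 with ha_def
      set b := B / sh0 with hb_def
      have ha : 0 < a := div_pos hAneg hs0
      have hb : 0 < b := div_pos hBneg hsh0
      have hkey := h a b ha.le hb.le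
      have hr : a ^ 2 + b ^ 2 ≤ Real.sqrt (a ^ 2 + b ^ 2) := by
        calc a ^ 2 + b ^ 2 = a * a + b * b := by ring
        _ ≤ Real.sqrt (a ^ 2 + b ^ 2) := hkey
      have hrpos : 0 < a ^ 2 + b ^ 2 := by positivity
      have hsq : (a ^ 2 + b ^ 2) ^ 2 ≤ a ^ 2 + b ^ 2 := by
        have h2 : (Real.sqrt (a ^ 2 + b ^ 2)) ^ 2 = a ^ 2 + b ^ 2 :=
          Real.sq_sqrt hrpos.le
        nlinarith [Real.sqrt_nonneg (a ^ 2 + b ^ 2)]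
      have hle1 : a ^ 2 + b ^ 2 ≤ 1 := by nlinarith
      rw [ha_def, hb_def, div_pow, div_pow] at hle1
      exact hle1
  refine ⟨key, ?_, ?_⟩
  all_goals rw [key]
  · have : {p : ℝ × ℝ | ∀ s t : ℝ, 0 ≤ s → 0 ≤ t →
        (p.1 / s0) * s + (p.2 / sh0) * t ≤ Real.sqrt (s ^ 2 + t ^ 2)} =
        ⋂ (s : ℝ), ⋂ (t : ℝ), {p : ℝ × ℝ | 0 ≤ s → 0 ≤ t →
        (p.1 / s0) * s + (p.2 / sh0) * t ≤ Real.sqrt (s ^ 2 + t ^ 2)} := by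
      ext p; simp [Set.mem_iInter]
    rw [this]
    refine isClosed_iInter fun s => isClosed_iInter fun t => ?_
    by_cases hst : 0 ≤ s ∧ 0 ≤ t
    · have heq : {p : ℝ × ℝ | 0 ≤ s → 0 ≤ t →
          (p.1 / s0) * s + (p.2 / sh0) * t ≤ Real.sqrt (s ^ 2 + t ^ 2)} =
          {p : ℝ × ℝ | (p.1 / s0) * s + (p.2 / sh0) * t ≤ Real.sqrt (s ^ 2 + t ^ 2)} := by
        ext p; simp [hst.1, hst.2]
      rw [heq]
      exact isClosed_le (by fun_prop) continuous_const
    · have heq : {p : ℝ × ℝ | 0 ≤ s → 0 ≤ t →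
          (p.1 / s0) * s + (p.2 / sh0) * t ≤ Real.sqrt (s ^ 2 + t ^ 2)} = Set.univ := by
        ext p
        simp only [Set.mem_setOf_eq, Set.mem_univ, iff_true]
        intro hs ht
        exact absurd ⟨hs, ht⟩ hst
      rw [heq]; exact isClosed_univ
  · intro x hx y hy u v hu hv huv
    simp only [Set.mem_setOf_eq] at hx hy ⊢
    intro s t hs ht
    have h1 := hx s t hs ht
    have h2 := hy s t hs ht
    have e1 := mul_le_mul_of_nonneg_left h1 hu
    have e2 := mul_le_mul_of_nonneg_left h2 hv
    have hfst : (u • x + v • y).1 = u * x.1 + v * y.1 := rfl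
    have hsnd : (u • x + v • y).2 = u * x.2 + v * y.2 := rfl
    rw [hfst, hsnd]
    have : u * Real.sqrt (s ^ 2 + t ^ 2) + v * Real.sqrt (s ^ 2 + t ^ 2)
        = Real.sqrt (s ^ 2 + t ^ 2) := by rw [← add_mul, huv, one_mul]
    have hsplit : (u * x.1 + v * y.1) / s0 * s + (u * x.2 + v * y.2) / sh0 * t
        = u * (x.1 / s0 * s + x.2 / sh0 * t) + v * (y.1 / s0 * s + y.2 / sh0 * t) := by
      field_simp
      ring
    rw [hsplit]
    linarith
end

section
/- Let σ₀, σ̂₀ > 0 and let Σ ∈ ℝ^{3×3}, g₁, g₂ ∈ ℝ. Consider the Fenchel–Legendre conjugate expression S(Σ, g₁, g₂) := sup { ⟨Σ, q⟩ + g₁·η + g₂·β − √(σ₀²‖sym q‖² + σ̂₀²‖skew q‖²) : q ∈ ℝ^{3×3}, tr q = 0, η, β ∈ ℝ, ‖sym q‖ ≤ η, ‖skew q‖ ≤ β }. Then S(Σ, g₁, g₂) = 0 if (Σ, g₁, g₂) ∈ E, and the supremand is unbounded above if (Σ, g₁, g₂) ∉ E. -/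
open Matrix

noncomputable section

abbrev M3 := Matrix (Fin 3) (Fin 3) ℝ

def msym (X : M3) : M3 := (1/2 : ℝ) • (X + Xᵀ)

def mskew (X : M3) : M3 := (1/2 : ℝ) • (X - Xᵀ)

def mdev (X : M3) : M3 := X - (X.trace / 3) • (1 : M3)

def minner (A B : M3) : ℝ := (A * Bᵀ).trace

def mnorm (A : M3) : ℝ := Real.sqrt (minner A A)

lemma minner_eq_sum (A B : M3) : minner A B = ∑ i, ∑ j, A i j * B i j := by
  simp only [minner, Matrix.trace, Matrix.diag, Matrix.mul_apply, Matrix.transpose_apply]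

lemma minner_comm (A B : M3) : minner A B = minner B A := by
  simp only [minner_eq_sum]
  apply Finset.sum_congr rfl; intros; apply Finset.sum_congr rfl; intros; ring

lemma minner_add_right (A B C : M3) : minner A (B + C) = minner A B + minner A C := by
  simp [minner_eq_sum, mul_add, Finset.sum_add_distrib]

lemma minner_smul_right (c : ℝ) (A B : M3) : minner A (c • B) = c * minner A B := by
  simp only [minner_eq_sum, Matrix.smul_apply, smul_eq_mul, Finset.mul_sum]
  apply Finset.sum_congr rfl; intros; apply Finset.sum_congr rfl; intros; ring

lemma minner_add_left (A B C : M3) : minner (A + B) C = minner A C + minner B C := by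
  rw [minner_comm, minner_add_right, minner_comm C A, minner_comm C B]

lemma minner_smul_left (c : ℝ) (A B : M3) : minner (c • A) B = c * minner A B := by
  rw [minner_comm, minner_smul_right, minner_comm]

lemma minner_zero_right (A : M3) : minner A 0 = 0 := by simp [minner_eq_sum]

lemma minner_self_nonneg (A : M3) : 0 ≤ minner A A := by
  rw [minner_eq_sum]
  apply Finset.sum_nonneg; intros
  apply Finset.sum_nonneg; intros
  exact mul_self_nonneg _

lemma mnorm_nonneg (A : M3) : 0 ≤ mnorm A := Real.sqrt_nonneg _

lemma mnorm_sq (A : M3) : mnorm A ^ 2 = minner A A :=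
  Real.sq_sqrt (minner_self_nonneg A)

lemma mnorm_zero : mnorm (0 : M3) = 0 := by simp [mnorm, minner_zero_right]

lemma mnorm_smul (c : ℝ) (hc : 0 ≤ c) (A : M3) : mnorm (c • A) = c * mnorm A := by
  rw [mnorm, minner_smul_left, minner_smul_right, ← mul_assoc, mnorm,
    Real.sqrt_mul (by positivity), Real.sqrt_mul_self hc]

lemma minner_le_mnorm_mul_mnorm (A B : M3) : minner A B ≤ mnorm A * mnorm B := by
  have h := Finset.sum_mul_sq_le_sq_mul_sq Finset.univ
    (fun p : Fin 3 × Fin 3 => A p.1 p.2) (fun p => B p.1 p.2)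
  have hA : minner A A = ∑ p : Fin 3 × Fin 3, (A p.1 p.2) ^ 2 := by
    rw [minner_eq_sum, Fintype.sum_prod_type]
    apply Finset.sum_congr rfl; intros; apply Finset.sum_congr rfl; intros; ring
  have hB : minner B B = ∑ p : Fin 3 × Fin 3, (B p.1 p.2) ^ 2 := by
    rw [minner_eq_sum, Fintype.sum_prod_type]
    apply Finset.sum_congr rfl; intros; apply Finset.sum_congr rfl; intros; ring
  have hAB : minner A B = ∑ p : Fin 3 × Fin 3, A p.1 p.2 * B p.1 p.2 := by
    rw [minner_eq_sum, Fintype.sum_prod_type]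
  calc minner A B ≤ |minner A B| := le_abs_self _
    _ = Real.sqrt ((minner A B) ^ 2) := (Real.sqrt_sq_eq_abs _).symm
    _ ≤ Real.sqrt (minner A A * minner B B) := by
        apply Real.sqrt_le_sqrt; rw [hA, hB, hAB]; exact h
    _ = mnorm A * mnorm B := Real.sqrt_mul (minner_self_nonneg A) _

lemma msym_transpose (X : M3) : (msym X)ᵀ = msym X := by
  simp [msym, Matrix.transpose_smul, Matrix.transpose_add, add_comm]

lemma mskew_transpose (X : M3) : (mskew X)ᵀ = -(mskew X) := by
  simp [mskew, Matrix.transpose_smul, Matrix.transpose_sub, smul_sub]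

lemma msym_add_mskew (X : M3) : msym X + mskew X = X := by
  simp only [msym, mskew, smul_add, smul_sub]
  module

lemma trace_msym (X : M3) : (msym X).trace = X.trace := by
  simp [msym, Matrix.trace_smul, Matrix.trace_add, Matrix.trace_transpose]
  ring

lemma trace_mskew (X : M3) : (mskew X).trace = 0 := by
  simp [mskew, Matrix.trace_smul, Matrix.trace_sub, Matrix.trace_transpose]

lemma trace_mdev (X : M3) : (mdev X).trace = 0 := by
  simp [mdev, Matrix.trace_sub, Matrix.trace_smul, Matrix.trace_one]

lemma mdev_add_smul (X : M3) : mdev X + (X.trace / 3) • (1 : M3) = X := by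
  simp [mdev]

lemma minner_one_right (A : M3) : minner A 1 = A.trace := by
  simp [minner]

lemma minner_sym_skew (A B : M3) (hA : Aᵀ = A) (hB : Bᵀ = -B) : minner A B = 0 := by
  have h1 : minner A B = -(A * B).trace := by
    rw [minner, hB]; simp [Matrix.trace_neg, Matrix.mul_neg]
  have h2 : minner A B = (A * B).trace := by
    rw [minner_comm, minner, hA, Matrix.trace_mul_comm]
  linarith [h1, h2.symm.trans h1]

lemma minner_decomp (S q : M3) (hq : q.trace = 0) :
    minner S q = minner (mdev (msym S)) (msym q) + minner (mskew S) (mskew q) := by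
  conv_lhs => rw [← msym_add_mskew S, ← msym_add_mskew q]
  rw [minner_add_left, minner_add_right, minner_add_right]
  rw [minner_sym_skew _ _ (msym_transpose S) (mskew_transpose q)]
  rw [minner_comm (mskew S) (msym q),
    minner_sym_skew _ _ (msym_transpose q) (mskew_transpose S)]
  have h3 : minner (msym S) (msym q) = minner (mdev (msym S)) (msym q) := by
    conv_lhs => rw [← mdev_add_smul (msym S)]
    have h1 : minner (1 : M3) (msym q) = 0 := by
      rw [minner_comm, minner_one_right, trace_msym, hq]
    rw [minner_add_left, minner_smul_left, h1]
    ring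
  rw [h3]; ring

lemma mdev_transpose_sym (X : M3) (hX : Xᵀ = X) : (mdev X)ᵀ = mdev X := by
  simp [mdev, Matrix.transpose_sub, Matrix.transpose_smul, hX]

lemma msym_of_sym (X : M3) (hX : Xᵀ = X) : msym X = X := by
  simp [msym, hX]; module

lemma mskew_of_sym (X : M3) (hX : Xᵀ = X) : mskew X = 0 := by
  simp [mskew, hX]

lemma msym_of_skew (X : M3) (hX : Xᵀ = -X) : msym X = 0 := by
  simp [msym, hX]

lemma mskew_of_skew (X : M3) (hX : Xᵀ = -X) : mskew X = X := by
  simp [mskew, hX, sub_neg_eq_add]; module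

lemma msym_add (A B : M3) : msym (A + B) = msym A + msym B := by
  simp [msym, Matrix.transpose_add, smul_add]; module

lemma mskew_add (A B : M3) : mskew (A + B) = mskew A + mskew B := by
  simp [mskew, Matrix.transpose_add, smul_sub, smul_add]; module

lemma msym_smul (c : ℝ) (A : M3) : msym (c • A) = c • msym A := by
  simp [msym, Matrix.transpose_smul]; module

lemma mskew_smul (c : ℝ) (A : M3) : mskew (c • A) = c • mskew A := by
  simp [mskew, Matrix.transpose_smul]; module

/-- The set `E` of admissible generalized stresses. -/
def Eset (s0 sh0 : ℝ) : Set (M3 × ℝ × ℝ) :=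
  {x | x.2.1 ≤ 0 ∧ x.2.2 ≤ 0 ∧
    (mnorm (mdev (msym x.1)) + x.2.1, mnorm (mskew x.1) + x.2.2) ∈ Kset s0 sh0}

lemma Kbound {s0 sh0 a b : ℝ} (hs0 : 0 < s0) (hsh0 : 0 < sh0)
    (hK : (a, b) ∈ Kset s0 sh0) {e f : ℝ} (he : 0 ≤ e) (hf : 0 ≤ f) :
    a * e + b * f ≤ Real.sqrt (s0 ^ 2 * e ^ 2 + sh0 ^ 2 * f ^ 2) := by
  have key : ∀ c : ℝ, 0 ≤ c → c ^ 2 ≤ s0 ^ 2 * e ^ 2 + sh0 ^ 2 * f ^ 2 →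
      c ≤ Real.sqrt (s0 ^ 2 * e ^ 2 + sh0 ^ 2 * f ^ 2) := by
    intro c hc h
    exact Real.le_sqrt_of_sq_le h
  simp only [Kset, Set.mem_union, Set.mem_setOf_eq] at hK
  rcases hK with (⟨h1, h2⟩ | ⟨h1, h2⟩) | ⟨h1, h2, h3⟩
  · calc a * e + b * f ≤ s0 * e := by nlinarith
      _ ≤ Real.sqrt (s0 ^ 2 * e ^ 2 + sh0 ^ 2 * f ^ 2) := by
        apply key _ (by positivity); nlinarith
  · calc a * e + b * f ≤ sh0 * f := by nlinarith
      _ ≤ Real.sqrt (s0 ^ 2 * e ^ 2 + sh0 ^ 2 * f ^ 2) := by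
        apply key _ (by positivity); nlinarith
  · apply key _ (by positivity)
    have h4 : a ^ 2 * sh0 ^ 2 + b ^ 2 * s0 ^ 2 ≤ s0 ^ 2 * sh0 ^ 2 := by
      have hs : (0:ℝ) < s0 ^ 2 := by positivity
      have hsh : (0:ℝ) < sh0 ^ 2 := by positivity
      rw [div_add_div _ _ (ne_of_gt hs) (ne_of_gt hsh), div_le_one (by positivity)] at h3
      nlinarith
    have h5 : (a ^ 2 * sh0 ^ 2 + b ^ 2 * s0 ^ 2) * (s0 ^ 2 * e ^ 2 + sh0 ^ 2 * f ^ 2) ≤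
        (s0 ^ 2 * sh0 ^ 2) * (s0 ^ 2 * e ^ 2 + sh0 ^ 2 * f ^ 2) :=
      mul_le_mul_of_nonneg_right h4 (by positivity)
    nlinarith [h5, sq_nonneg (a * sh0 ^ 2 * f - b * s0 ^ 2 * e),
      mul_pos (pow_pos hs0 2) (pow_pos hsh0 2)]

lemma notK {s0 sh0 a b : ℝ} (hs0 : 0 < s0) (hsh0 : 0 < sh0)
    (hK : (a, b) ∉ Kset s0 sh0) :
    ∃ e f : ℝ, 0 ≤ e ∧ 0 ≤ f ∧ (e = 0 ∨ 0 < a) ∧ (f = 0 ∨ 0 < b) ∧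
      Real.sqrt (s0 ^ 2 * e ^ 2 + sh0 ^ 2 * f ^ 2) < a * e + b * f := by
  simp only [Kset, Set.mem_union, Set.mem_setOf_eq, not_or, not_and_or, not_le] at hK
  obtain ⟨⟨hK1, hK2⟩, hK3⟩ := hK
  by_cases hA : s0 < a
  · refine ⟨1, 0, zero_le_one, le_refl 0, Or.inr (hs0.trans hA), Or.inl rfl, ?_⟩
    have : s0 ^ 2 * 1 ^ 2 + sh0 ^ 2 * 0 ^ 2 = s0 ^ 2 := by ring
    rw [this, Real.sqrt_sq hs0.le]; linarith
  by_cases hB : sh0 < b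
  · refine ⟨0, 1, le_refl 0, zero_le_one, Or.inl rfl, Or.inr (hsh0.trans hB), ?_⟩
    have : s0 ^ 2 * 0 ^ 2 + sh0 ^ 2 * 1 ^ 2 = sh0 ^ 2 := by ring
    rw [this, Real.sqrt_sq hsh0.le]; linarith
  push_neg at hA hB
  have hb : 0 < b := by
    rcases hK1 with h | h
    · linarith
    · exact h
  have ha : 0 < a := by
    rcases hK2 with h | h
    · exact h
    · linarith
  have hc : 1 < a ^ 2 / s0 ^ 2 + b ^ 2 / sh0 ^ 2 := by
    rcases hK3 with h | h | h
    · linarith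
    · linarith
    · exact h
  set c := a ^ 2 / s0 ^ 2 + b ^ 2 / sh0 ^ 2 with hcdef
  refine ⟨a / s0 ^ 2, b / sh0 ^ 2, by positivity, by positivity, Or.inr ha, Or.inr hb, ?_⟩
  have h1 : a * (a / s0 ^ 2) + b * (b / sh0 ^ 2) = c := by rw [hcdef]; ring
  have h2 : s0 ^ 2 * (a / s0 ^ 2) ^ 2 + sh0 ^ 2 * (b / sh0 ^ 2) ^ 2 = c := by
    rw [hcdef]; field_simp
  rw [h1, h2]
  calc Real.sqrt c < Real.sqrt (c ^ 2) := by
        apply Real.sqrt_lt_sqrt (by linarith); nlinarith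
    _ = c := Real.sqrt_sq (by linarith)

lemma construct (S : M3) {c d : ℝ} (hc : 0 ≤ c) (hd : 0 ≤ d) :
    (c • mdev (msym S) + d • mskew S).trace = 0 ∧
    mnorm (msym (c • mdev (msym S) + d • mskew S)) = c * mnorm (mdev (msym S)) ∧
    mnorm (mskew (c • mdev (msym S) + d • mskew S)) = d * mnorm (mskew S) ∧
    minner S (c • mdev (msym S) + d • mskew S) =
      c * mnorm (mdev (msym S)) ^ 2 + d * mnorm (mskew S) ^ 2 := by
  set D := mdev (msym S) with hDdef
  set W := mskew S with hWdef
  have hD : Dᵀ = D := mdev_transpose_sym _ (msym_transpose S)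
  have hW : Wᵀ = -W := mskew_transpose S
  have hsym : msym (c • D + d • W) = c • D := by
    rw [msym_add, msym_smul, msym_smul, msym_of_sym D hD, msym_of_skew W hW,
      smul_zero, add_zero]
  have hskew : mskew (c • D + d • W) = d • W := by
    rw [mskew_add, mskew_smul, mskew_smul, mskew_of_sym D hD, mskew_of_skew W hW,
      smul_zero, zero_add]
  have htr : (c • D + d • W).trace = 0 := by
    rw [Matrix.trace_add, Matrix.trace_smul, Matrix.trace_smul, hDdef, hWdef,
      trace_mdev, trace_mskew]
    simp
  refine ⟨htr, ?_, ?_, ?_⟩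
  · rw [hsym, mnorm_smul c hc]
  · rw [hskew, mnorm_smul d hd]
  · rw [minner_decomp S _ htr, hsym, hskew, minner_smul_right, minner_smul_right,
      ← mnorm_sq, ← mnorm_sq]

/-- The Fenchel–Legendre conjugate of the dissipation function equals the indicator
function of the set `E` of admissible generalized stresses: the supremum of
`⟨Σ, q⟩ + g₁ η + g₂ β − √(σ₀²‖sym q‖² + σ̂₀²‖skew q‖²)` over trace-free `q` and
`η, β` with `‖sym q‖ ≤ η`, `‖skew q‖ ≤ β` is `0` when `(Σ, g₁, g₂) ∈ E`, and the
supremand is unbounded above when `(Σ, g₁, g₂) ∉ E`. -/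
theorem fenchel_conjugate_dissipation (s0 sh0 : ℝ) (hs0 : 0 < s0) (hsh0 : 0 < sh0)
    (S : M3) (g1 g2 : ℝ) :
    ((S, g1, g2) ∈ Eset s0 sh0 →
      IsLUB {x : ℝ | ∃ (q : M3) (η β : ℝ), q.trace = 0 ∧
        mnorm (msym q) ≤ η ∧ mnorm (mskew q) ≤ β ∧
        x = minner S q + g1 * η + g2 * β -
          Real.sqrt (s0 ^ 2 * (mnorm (msym q)) ^ 2 + sh0 ^ 2 * (mnorm (mskew q)) ^ 2)} 0) ∧
    ((S, g1, g2) ∉ Eset s0 sh0 →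
      ∀ M : ℝ, ∃ (q : M3) (η β : ℝ), q.trace = 0 ∧
        mnorm (msym q) ≤ η ∧ mnorm (mskew q) ≤ β ∧
        M < minner S q + g1 * η + g2 * β -
          Real.sqrt (s0 ^ 2 * (mnorm (msym q)) ^ 2 + sh0 ^ 2 * (mnorm (mskew q)) ^ 2)) := by
  have hzero_mem : (0 : ℝ) ∈ {x : ℝ | ∃ (q : M3) (η β : ℝ), q.trace = 0 ∧
      mnorm (msym q) ≤ η ∧ mnorm (mskew q) ≤ β ∧
      x = minner S q + g1 * η + g2 * β -
        Real.sqrt (s0 ^ 2 * (mnorm (msym q)) ^ 2 + sh0 ^ 2 * (mnorm (mskew q)) ^ 2)} := by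
    refine ⟨0, 0, 0, (by simp : Matrix.trace (0 : M3) = 0), ?_, ?_, ?_⟩
    · simp [msym, mnorm_zero]
    · simp [mskew, mnorm_zero]
    · simp [msym, mskew, mnorm_zero, minner_zero_right]
  constructor
  · -- membership case
    rintro ⟨hg1, hg2, hKmem⟩
    constructor
    · rintro x ⟨q, η, β, hq, hη, hβ, rfl⟩
      have he : 0 ≤ mnorm (msym q) := mnorm_nonneg _
      have hf : 0 ≤ mnorm (mskew q) := mnorm_nonneg _
      have hSq := minner_decomp S q hq
      have h1 := minner_le_mnorm_mul_mnorm (mdev (msym S)) (msym q)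
      have h2 := minner_le_mnorm_mul_mnorm (mskew S) (mskew q)
      have h3 : g1 * η ≤ g1 * mnorm (msym q) := mul_le_mul_of_nonpos_left hη hg1
      have h4 : g2 * β ≤ g2 * mnorm (mskew q) := mul_le_mul_of_nonpos_left hβ hg2
      have hKb := Kbound hs0 hsh0 hKmem he hf
      nlinarith [hKb, h1, h2, h3, h4]
    · intro ub hub
      exact hub hzero_mem
  · -- non-membership case
    intro hE M
    by_cases hg1 : g1 ≤ 0
    · by_cases hg2 : g2 ≤ 0
      · -- (a, b) ∉ Kset
        have hK : (mnorm (mdev (msym S)) + g1, mnorm (mskew S) + g2) ∉ Kset s0 sh0 :=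
          fun h => hE ⟨hg1, hg2, h⟩
        obtain ⟨e, f, he, hf, hea, hfb, hlt⟩ := notK hs0 hsh0 hK
        set D := mdev (msym S) with hDdef
        set W := mskew S with hWdef
        set a := mnorm D + g1 with hadef
        set b := mnorm W + g2 with hbdef
        set r := Real.sqrt (s0 ^ 2 * e ^ 2 + sh0 ^ 2 * f ^ 2) with hrdef
        have hδ : 0 < a * e + b * f - r := sub_pos.mpr hlt
        set δ := a * e + b * f - r with hδdef
        set t := max 1 ((M + 1) / δ) with htdef
        have ht0 : (0:ℝ) ≤ t := le_trans zero_le_one (le_max_left _ _)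
        have htδ : M < t * δ := by
          have h : (M + 1) / δ ≤ t := le_max_right _ _
          have h2 : M + 1 ≤ t * δ := by
            rw [div_le_iff₀ hδ] at h; linarith
          linarith
        set c := t * e / mnorm D with hcdef
        set d := t * f / mnorm W with hddef
        have hc : 0 ≤ c := div_nonneg (mul_nonneg ht0 he) (mnorm_nonneg D)
        have hd : 0 ≤ d := div_nonneg (mul_nonneg ht0 hf) (mnorm_nonneg W)
        have hce : c * mnorm D = t * e := by
          rcases hea with h | h
          · simp [hcdef, h]
          · have hDpos : 0 < mnorm D := lt_of_lt_of_le h (by rw [hadef]; linarith)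
            rw [hcdef, div_mul_cancel₀ _ (ne_of_gt hDpos)]
        have hdf : d * mnorm W = t * f := by
          rcases hfb with h | h
          · simp [hddef, h]
          · have hWpos : 0 < mnorm W := lt_of_lt_of_le h (by rw [hbdef]; linarith)
            rw [hddef, div_mul_cancel₀ _ (ne_of_gt hWpos)]
        obtain ⟨htr, hsy, hsk, hin⟩ := construct S hc hd
        refine ⟨c • D + d • W, t * e, t * f, htr, ?_, ?_, ?_⟩
        · rw [hsy, hce]
        · rw [hsk, hdf]
        · rw [hin, hsy, hsk, hce, hdf]
          have hsq : Real.sqrt (s0 ^ 2 * (t * e) ^ 2 + sh0 ^ 2 * (t * f) ^ 2) = t * r := by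
            rw [show s0 ^ 2 * (t * e) ^ 2 + sh0 ^ 2 * (t * f) ^ 2
                = t ^ 2 * (s0 ^ 2 * e ^ 2 + sh0 ^ 2 * f ^ 2) by ring,
              Real.sqrt_mul (sq_nonneg t), Real.sqrt_sq ht0, hrdef]
          rw [hsq]
          have hval : c * mnorm D ^ 2 + d * mnorm W ^ 2 + g1 * (t * e) + g2 * (t * f)
              - t * r = t * δ := by
            rw [show c * mnorm D ^ 2 = (c * mnorm D) * mnorm D by ring,
              show d * mnorm W ^ 2 = (d * mnorm W) * mnorm W by ring, hce, hdf,
              hδdef, hadef, hbdef]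
            ring
          rw [hval]
          exact htδ
      · -- g2 > 0
        push_neg at hg2
        refine ⟨0, 0, (|M| + 1) / g2, (by simp : Matrix.trace (0 : M3) = 0), ?_, ?_, ?_⟩
        · simp [msym, mnorm_zero]
        · simp [mskew, mnorm_zero]
          positivity
        · simp only [msym, mskew, smul_zero, Matrix.transpose_zero, add_zero, sub_zero,
            zero_add, smul_add]
          have h1 : minner S 0 = 0 := minner_zero_right S
          have h2 : g2 * ((|M| + 1) / g2) = |M| + 1 := by field_simp
          simp [mnorm_zero, minner_zero_right, h2]
          have := le_abs_self M
          nlinarith [abs_nonneg M]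
    · -- g1 > 0
      push_neg at hg1
      refine ⟨0, (|M| + 1) / g1, 0, (by simp : Matrix.trace (0 : M3) = 0), ?_, ?_, ?_⟩
      · simp [msym, mnorm_zero]
        positivity
      · simp [mskew, mnorm_zero]
      · have h2 : g1 * ((|M| + 1) / g1) = |M| + 1 := by field_simp
        simp [msym, mskew, mnorm_zero, minner_zero_right, h2]
        have := le_abs_self M
        nlinarith [abs_nonneg M]
end
end

section
/- Let σ₀, σ̂₀ > 0, r₁, r₂ ≥ 0 and A, B ∈ ℝ. The function (s,t) ↦ A·s + B·t − (r₁·s + r₂·t + √(σ₀²s² + σ̂₀²t²)) on {(s,t) : s ≥ 0, t ≥ 0} has supremum equal to 0 if (A − r₁, B − r₂) ∈ K, and is unbounded above otherwise. (Thus adding the terms r₁·s + r₂·t to the dissipation function corresponds to a dilation of the set of admissible stresses.) -/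
lemma key_bound (s0 sh0 a b s t : ℝ) (hs0 : 0 < s0) (hsh0 : 0 < sh0)
    (hs : 0 ≤ s) (ht : 0 ≤ t) (hK : (a, b) ∈ Kset s0 sh0) :
    a * s + b * t ≤ Real.sqrt (s0 ^ 2 * s ^ 2 + sh0 ^ 2 * t ^ 2) := by
  rcases hK with (⟨ha, hb⟩ | ⟨ha, hb⟩) | ⟨ha, hb, he⟩
  · calc a * s + b * t ≤ s0 * s := by nlinarith
    _ = Real.sqrt ((s0 * s) ^ 2) := (Real.sqrt_sq (by positivity)).symm
    _ ≤ Real.sqrt (s0 ^ 2 * s ^ 2 + sh0 ^ 2 * t ^ 2) := Real.sqrt_le_sqrt (by nlinarith)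
  · calc a * s + b * t ≤ sh0 * t := by nlinarith
    _ = Real.sqrt ((sh0 * t) ^ 2) := (Real.sqrt_sq (by positivity)).symm
    _ ≤ Real.sqrt (s0 ^ 2 * s ^ 2 + sh0 ^ 2 * t ^ 2) := Real.sqrt_le_sqrt (by nlinarith)
  · have he' : a ^ 2 * sh0 ^ 2 + b ^ 2 * s0 ^ 2 ≤ s0 ^ 2 * sh0 ^ 2 := by
      rw [div_add_div _ _ (by positivity) (by positivity), div_le_one (by positivity)] at he
      nlinarith [he]
    have hX : (0:ℝ) ≤ s0 ^ 2 * s ^ 2 + sh0 ^ 2 * t ^ 2 := by positivity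
    have h2 : (a * s + b * t) ^ 2 ≤ s0 ^ 2 * s ^ 2 + sh0 ^ 2 * t ^ 2 := by
      nlinarith [sq_nonneg (a * sh0 ^ 2 * t - b * s0 ^ 2 * s),
        mul_le_mul_of_nonneg_right he' hX, mul_pos (pow_pos hs0 2) (pow_pos hsh0 2)]
    calc a * s + b * t = Real.sqrt ((a * s + b * t) ^ 2) :=
          (Real.sqrt_sq (by positivity)).symm
    _ ≤ Real.sqrt (s0 ^ 2 * s ^ 2 + sh0 ^ 2 * t ^ 2) := Real.sqrt_le_sqrt h2

/-- For the generalized dissipation `D̂(s,t) = r₁ s + r₂ t + √(σ₀² s² + σ̂₀² t²)`, the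
supremum of `(s,t) ↦ A·s + B·t − D̂(s,t)` over `s, t ≥ 0` equals `0` if
`(A − r₁, B − r₂) ∈ K`, and the function is unbounded above otherwise. -/
theorem sup_generalized_dissipation (s0 sh0 r1 r2 A B : ℝ)
    (hs0 : 0 < s0) (hsh0 : 0 < sh0) (hr1 : 0 ≤ r1) (hr2 : 0 ≤ r2) :
    ((A - r1, B - r2) ∈ Kset s0 sh0 →
      IsLUB {x : ℝ | ∃ s t : ℝ, 0 ≤ s ∧ 0 ≤ t ∧
        x = A * s + B * t -
          (r1 * s + r2 * t + Real.sqrt (s0 ^ 2 * s ^ 2 + sh0 ^ 2 * t ^ 2))} 0) ∧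
    ((A - r1, B - r2) ∉ Kset s0 sh0 →
      ∀ M : ℝ, ∃ s t : ℝ, 0 ≤ s ∧ 0 ≤ t ∧
        M < A * s + B * t -
          (r1 * s + r2 * t + Real.sqrt (s0 ^ 2 * s ^ 2 + sh0 ^ 2 * t ^ 2))) := by
  constructor
  · intro hK
    constructor
    · rintro x ⟨s, t, hs, ht, rfl⟩
      have h := key_bound s0 sh0 (A - r1) (B - r2) s t hs0 hsh0 hs ht hK
      nlinarith [h]
    · intro y hy
      refine hy ⟨0, 0, le_refl 0, le_refl 0, ?_⟩
      norm_num
  · intro hK M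
    set a := A - r1 with ha_def
    set b := B - r2 with hb_def
    simp only [Kset, Set.mem_union, Set.mem_setOf_eq, not_or] at hK
    push_neg at hK
    obtain ⟨⟨hK1, hK2⟩, hK3⟩ := hK
    obtain ⟨u, v, hu, hv, hc⟩ : ∃ u v : ℝ, 0 ≤ u ∧ 0 ≤ v ∧
        Real.sqrt (s0 ^ 2 * u ^ 2 + sh0 ^ 2 * v ^ 2) < a * u + b * v := by
      rcases le_or_gt a s0 with ha | ha
      · rcases le_or_gt b sh0 with hb | hb
        · have hb0 : 0 < b := hK1 ha
          have ha0 : 0 < a := by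
            by_contra h
            exact absurd (hK2 (le_of_not_gt h)) (not_lt.mpr hb)
          have he : 1 < a ^ 2 / s0 ^ 2 + b ^ 2 / sh0 ^ 2 := hK3 ha0.le hb0.le
          refine ⟨a / s0 ^ 2, b / sh0 ^ 2, by positivity, by positivity, ?_⟩
          have hE : s0 ^ 2 * (a / s0 ^ 2) ^ 2 + sh0 ^ 2 * (b / sh0 ^ 2) ^ 2
              = a ^ 2 / s0 ^ 2 + b ^ 2 / sh0 ^ 2 := by
            field_simp
          have hE2 : a * (a / s0 ^ 2) + b * (b / sh0 ^ 2)
              = a ^ 2 / s0 ^ 2 + b ^ 2 / sh0 ^ 2 := by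
            field_simp
          rw [hE, hE2]
          set E := a ^ 2 / s0 ^ 2 + b ^ 2 / sh0 ^ 2 with hEdef
          calc Real.sqrt E < Real.sqrt (E ^ 2) := by
                apply Real.sqrt_lt_sqrt (by positivity)
                nlinarith
          _ = E := Real.sqrt_sq (by positivity)
        · refine ⟨0, 1, le_refl 0, zero_le_one, ?_⟩
          have : Real.sqrt (s0 ^ 2 * 0 ^ 2 + sh0 ^ 2 * 1 ^ 2) = sh0 := by
            rw [show s0 ^ 2 * 0 ^ 2 + sh0 ^ 2 * 1 ^ 2 = sh0 ^ 2 by ring]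
            exact Real.sqrt_sq hsh0.le
          rw [this]
          linarith
      · refine ⟨1, 0, zero_le_one, le_refl 0, ?_⟩
        have : Real.sqrt (s0 ^ 2 * 1 ^ 2 + sh0 ^ 2 * 0 ^ 2) = s0 := by
          rw [show s0 ^ 2 * 1 ^ 2 + sh0 ^ 2 * 0 ^ 2 = s0 ^ 2 by ring]
          exact Real.sqrt_sq hs0.le
        rw [this]
        linarith
    set X := Real.sqrt (s0 ^ 2 * u ^ 2 + sh0 ^ 2 * v ^ 2) with hXdef
    have hc' : 0 < a * u + b * v - X := by linarith
    set l : ℝ := max 1 ((M + 1) / (a * u + b * v - X)) with hldef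
    have hl1 : (1:ℝ) ≤ l := le_max_left _ _
    have hl0 : 0 < l := lt_of_lt_of_le one_pos hl1
    have hlM : M + 1 ≤ l * (a * u + b * v - X) := by
      have h := le_max_right 1 ((M + 1) / (a * u + b * v - X))
      calc M + 1 = ((M + 1) / (a * u + b * v - X)) * (a * u + b * v - X) := by
            field_simp
      _ ≤ l * (a * u + b * v - X) :=
            mul_le_mul_of_nonneg_right h hc'.le
    refine ⟨l * u, l * v, by positivity, by positivity, ?_⟩
    have hsqrt : Real.sqrt (s0 ^ 2 * (l * u) ^ 2 + sh0 ^ 2 * (l * v) ^ 2) = l * X := by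
      rw [show s0 ^ 2 * (l * u) ^ 2 + sh0 ^ 2 * (l * v) ^ 2
          = l ^ 2 * (s0 ^ 2 * u ^ 2 + sh0 ^ 2 * v ^ 2) by ring,
        Real.sqrt_mul (sq_nonneg l), Real.sqrt_sq hl0.le, hXdef]
    rw [hsqrt]
    have hgoal : A * (l * u) + B * (l * v) - (r1 * (l * u) + r2 * (l * v) + l * X)
        = l * (a * u + b * v - X) := by rw [ha_def, hb_def]; ring
    rw [hgoal]
    linarith
end
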